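/- Let X have the Pareto distribution with parameters α > 0 and δ > 0. Then p_eR(X) = P(X > Q3(X) + 3·IQR(X)) = 3/(4·(4·3^{1/α} − 3)^α). -/

import Mathlib

open MeasureTheory Real

variable {Ω : Type*} [MeasurableSpace Ω]

/-- Generalized inverse of the c.d.f.: `F⁻(p) = inf {x : F(x) ≥ p}`. -/
noncomputable def quantile (μ : Measure Ω) (X : Ω → ℝ) (p : ℝ) : ℝ :=
  sInf {x : ℝ | p ≤ (μ {ω | X ω ≤ x}).toReal}

noncomputable def Q1 (μ : Measure Ω) (X : Ω → ℝ) : ℝ := quantile μ X (1/4)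

noncomputable def Q3 (μ : Measure Ω) (X : Ω → ℝ) : ℝ := quantile μ X (3/4)

noncomputable def IQR (μ : Measure Ω) (X : Ω → ℝ) : ℝ := Q3 μ X - Q1 μ X

/-- Probability of a left extreme outlier. -/
noncomputable def peL (μ : Measure Ω) (X : Ω → ℝ) : ℝ :=
  (μ {ω | X ω < Q1 μ X - 3 * IQR μ X}).toReal

/-- Probability of a right extreme outlier. -/
noncomputable def peR (μ : Measure Ω) (X : Ω → ℝ) : ℝ :=
  (μ {ω | Q3 μ X + 3 * IQR μ X < X ω}).toReal

noncomputable def pe2 (μ : Measure Ω) (X : Ω → ℝ) : ℝ := peL μ X + peR μ X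

/-! On `[δ, ∞)` the c.d.f. `1 - (δ/x)^α` is strictly increasing and it vanishes below `δ`, so the
`p`-quantile is the point where it equals `p`, namely `δ (1 - p)^(-1/α)`. The fence
`Q3 + 3 IQR = δ 4^(1/α) (4 - 3 · 3^(-1/α))` lies above `δ`, where the tail formula applies. -/

lemma toReal_measure_le_eq_one_sub (μ : Measure Ω) [IsProbabilityMeasure μ] {X : Ω → ℝ}
    (hX : Measurable X) (x : ℝ) :
    (μ {ω | X ω ≤ x}).toReal = 1 - (μ {ω | x < X ω}).toReal := by
  have hcompl : {ω | X ω ≤ x} = {ω | x < X ω}ᶜ := by ext; simp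
  rw [hcompl, ← measureReal_def, probReal_compl_eq_one_sub (measurableSet_lt measurable_const hX),
    measureReal_def]

lemma quantile_eq_of_le_of_forall_lt (μ : Measure Ω) (X : Ω → ℝ) {p q : ℝ}
    (hq : p ≤ (μ {ω | X ω ≤ q}).toReal)
    (hlt : ∀ x < q, (μ {ω | X ω ≤ x}).toReal < p) :
    quantile μ X p = q :=
  IsLeast.csInf_eq ⟨hq, fun _ hx => not_lt.1 fun h => (hlt _ h).not_ge hx⟩

lemma pareto_quantile (μ : Measure Ω) [IsProbabilityMeasure μ]
    (X : Ω → ℝ) (hX : Measurable X) (α δ : ℝ) (ha : 0 < α) (hd : 0 < δ)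
    (htail : ∀ x : ℝ, δ ≤ x → (μ {ω | x < X ω}).toReal = (δ / x) ^ α)
    (hlow : ∀ x : ℝ, x < δ → μ {ω | X ω ≤ x} = 0)
    {p : ℝ} (hp0 : 0 < p) (hp1 : p < 1) :
    quantile μ X p = δ * (1 - p)⁻¹ ^ α⁻¹ := by
  have hcdf : ∀ x, δ ≤ x → (μ {ω | X ω ≤ x}).toReal = 1 - (δ / x) ^ α := fun x hx => by
    rw [toReal_measure_le_eq_one_sub μ hX, htail x hx]
  set q := δ * (1 - p)⁻¹ ^ α⁻¹
  have hscale : 1 ≤ (1 - p)⁻¹ ^ α⁻¹ :=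
    one_le_rpow (one_le_inv₀ (by linarith) |>.2 (by linarith)) (by positivity)
  have hδq : δ ≤ q := le_mul_of_one_le_right hd.le hscale
  have htail_q : (δ / q) ^ α = 1 - p := by
    rw [div_mul_cancel_left₀ hd.ne', ← inv_rpow (by positivity),
      rpow_inv_rpow (by positivity) ha.ne', inv_inv]
  refine quantile_eq_of_le_of_forall_lt μ X (by rw [hcdf q hδq, htail_q]; linarith) ?_
  intro x hxq
  rcases lt_or_ge x δ with hxδ | hδx
  · simpa [hlow x hxδ] using hp0
  · have : (δ / q) ^ α < (δ / x) ^ α :=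
      rpow_lt_rpow (by positivity) (div_lt_div_of_pos_left hd (hd.trans_le hδx) hxq) ha
    rw [hcdf x hδx]
    linarith

theorem pareto_peR (μ : Measure Ω) [IsProbabilityMeasure μ]
    (X : Ω → ℝ) (hX : Measurable X) (α δ : ℝ) (ha : 0 < α) (hd : 0 < δ)
    (htail : ∀ x : ℝ, δ ≤ x → (μ {ω | x < X ω}).toReal = (δ / x) ^ α)
    (hlow : ∀ x : ℝ, x < δ → μ {ω | X ω ≤ x} = 0) :
    peR μ X = 3 / (4 * (4 * (3:ℝ) ^ (1/α) - 3) ^ α) := by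
  set a : ℝ := 3 ^ α⁻¹
  set b : ℝ := 4 ^ α⁻¹
  have hQ3 : Q3 μ X = δ * b := by
    rw [Q3, pareto_quantile μ X hX α δ ha hd htail hlow (by norm_num) (by norm_num),
    show (1 - 3 / 4 : ℝ)⁻¹ = 4 by norm_num]
  have hQ1 : Q1 μ X = δ * (b / a) := by
    rw [Q1, pareto_quantile μ X hX α δ ha hd htail hlow (by norm_num) (by norm_num),
      show (1 - 1 / 4 : ℝ)⁻¹ = 4 / 3 by norm_num, div_rpow (by norm_num) (by norm_num)]
  have ha1 : 1 ≤ a := one_le_rpow (by norm_num) (by positivity)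
  have hb1 : 1 ≤ b := one_le_rpow (by norm_num) (by positivity)
  have h4a3 : 1 ≤ 4 * a - 3 := by linarith
  have hfence : Q3 μ X + 3 * IQR μ X = δ * (b * (4 * a - 3) / a) := by
    rw [IQR, hQ3, hQ1]
    field_simp
    ring
  have hδ_fence : δ ≤ δ * (b * (4 * a - 3) / a) := by
    refine le_mul_of_one_le_right hd.le ((one_le_div₀ (by positivity)).2 ?_)
    nlinarith
  rw [peR, hfence, htail _ hδ_fence, one_div, div_mul_cancel_left₀ hd.ne', inv_div,
    div_rpow (by positivity) (by nlinarith), mul_rpow (by positivity) (by linarith),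
    rpow_inv_rpow (by norm_num) ha.ne', rpow_inv_rpow (by norm_num) ha.ne']
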